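/- Let x_A, x_B be reals with 0 < x_A < x_B < 1. For each N ∈ ℕ define the binomial weights p^N_k(x) = C(N,k)·x^k·(1−x)^{N−k} for k = 0,…,N, and let k*_N be the least k ∈ {0,…,N} with Σ_{j=0}^{k} (p^N_j(x_A) + p^N_j(x_B)) > 1. Then (k*_N : ℝ)/N → x₀* as N → ∞, where x₀* = log((1−x_A)/(1−x_B)) / log(((1−x_A)·x_B)/((1−x_B)·x_A)). -/

import Mathlib

/-!
The cumulative sum `∑_{j ≤ k} (p_j(x_A) + p_j(x_B))` exceeds `1` exactly when the mass of
`Bin(N, x_B)` on `[0, k]` exceeds the mass of `Bin(N, x_A)` on `(k, N]`. Away from the mean the binomial weights decay geometrically, so each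
of these tails is at most a constant times its boundary weight. At a common index the two weight
families differ by an exponential tilt, `p_k(x_A) = exp (θ (x₀* N - k)) p_k(x_B)` with `θ > 0`
the log-odds ratio. Hence for `k ≥ (x₀* + δ) N` the `A`-tail is exponentially smaller than
`p_k(x_B)`, and for `k + 1 ≤ (x₀* - δ) N` the `B`-tail is exponentially smaller than
`p_{k+1}(x_A)`, which pins `k*_N / N` within `δ` of `x₀*` for large `N`. Gibbs' inequality puts
`x₀*` strictly between `x_A` and `x_B`, so the geometric decay is available on both sides.
-/

open Real Finset Filter Topology

noncomputable def binomWeight (N : ℕ) (x : ℝ) (k : ℕ) : ℝ :=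
  N.choose k * x ^ k * (1 - x) ^ (N - k)

section binomWeight

variable {N k : ℕ} {x : ℝ}

lemma binomWeight_nonneg (hx0 : 0 ≤ x) (hx1 : x ≤ 1) : 0 ≤ binomWeight N x k := by
  unfold binomWeight
  have : 0 ≤ 1 - x := by linarith
  positivity

lemma binomWeight_pos (hx0 : 0 < x) (hx1 : x < 1) (hk : k ≤ N) : 0 < binomWeight N x k := by
  unfold binomWeight
  have : 0 < 1 - x := by linarith
  have : (0 : ℝ) < N.choose k := by exact_mod_cast Nat.choose_pos hk
  positivity

lemma sum_range_binomWeight : ∑ k ∈ range (N + 1), binomWeight N x k = 1 := by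
  have := (add_pow x (1 - x) N).symm
  simp only [add_sub_cancel, one_pow] at this
  rw [← this]
  exact sum_congr rfl fun k _ => by unfold binomWeight; ring

lemma binomWeight_one_sub (hk : k ≤ N) : binomWeight N (1 - x) (N - k) = binomWeight N x k := by
  simp only [binomWeight, Nat.choose_symm hk, Nat.sub_sub_self hk, sub_sub_cancel]
  ring

lemma binomWeight_succ_mul (hk : k < N) :
    binomWeight N x (k + 1) * ((k + 1) * (1 - x)) = binomWeight N x k * ((N - k) * x) := by
  obtain ⟨j, rfl⟩ := Nat.exists_eq_add_of_lt hk
  have hchoose : ((k + j + 1).choose (k + 1) : ℝ) * (k + 1) = (k + j + 1).choose k * (j + 1) := by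
    have := Nat.choose_succ_right_eq (k + j + 1) k
    rw [show k + j + 1 - k = j + 1 by omega] at this
    exact_mod_cast this
  simp only [binomWeight, show k + j + 1 - (k + 1) = j by omega,
    show k + j + 1 - k = j + 1 by omega]
  push_cast
  linear_combination x ^ (k + 1) * (1 - x) ^ (j + 1) * hchoose

lemma binomWeight_succ_le {t : ℝ} (hx0 : 0 < x) (hx1 : x < 1) (ht0 : 0 < t) (ht1 : t ≤ 1)
    (hk : t * N ≤ k) :
    binomWeight N x (k + 1) ≤ (1 - t) / t * (x / (1 - x)) * binomWeight N x k := by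
  have hx1' : 0 < 1 - x := by linarith
  have hq : 0 ≤ (1 - t) / t * (x / (1 - x)) :=
    mul_nonneg (div_nonneg (by linarith) ht0.le) (div_nonneg hx0.le hx1'.le)
  have hw := binomWeight_nonneg (N := N) (k := k) hx0.le hx1.le
  rcases lt_or_ge k N with hkN | hkN
  · have hpos : (0 : ℝ) < (k + 1) * (1 - x) := by positivity
    rw [← mul_le_mul_iff_left₀ hpos, binomWeight_succ_mul hkN, mul_right_comm, mul_comm]
    apply mul_le_mul_of_nonneg_right _ hw
    have : t * (N - k) ≤ (1 - t) * (k + 1) := by nlinarith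
    rw [show (1 - t) / t * (x / (1 - x)) * ((k + 1) * (1 - x)) = (1 - t) * (k + 1) / t * x by
      field_simp [hx1'.ne']]
    apply mul_le_mul_of_nonneg_right _ hx0.le
    rw [le_div_iff₀ ht0]
    linarith
  · rw [binomWeight, Nat.choose_eq_zero_of_lt (by omega)]
    simpa using mul_nonneg hq hw

end binomWeight

lemma sum_range_succ_le_of_le_mul {g : ℕ → ℝ} {q : ℝ} (hq0 : 0 ≤ q) (hq1 : q < 1)
    (hg0 : 0 ≤ g 0) (hg : ∀ j, g (j + 1) ≤ q * g j) (n : ℕ) :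
    ∑ j ∈ range n, g (j + 1) ≤ q / (1 - q) * g 0 := by
  have hpow : ∀ j, g j ≤ q ^ j * g 0 := by
    intro j
    induction j with
    | zero => simp
    | succ j ih => calc
        g (j + 1) ≤ q * g j := hg j
        _ ≤ q * (q ^ j * g 0) := mul_le_mul_of_nonneg_left ih hq0
        _ = q ^ (j + 1) * g 0 := by ring
  calc ∑ j ∈ range n, g (j + 1)
      ≤ ∑ j ∈ Ico 1 (n + 1), q ^ j * g 0 := by
        rw [sum_Ico_eq_sum_range, Nat.add_sub_cancel]
        exact sum_le_sum fun j _ => by rw [add_comm 1 j]; exact hpow (j + 1)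
    _ = (∑ j ∈ Ico 1 (n + 1), q ^ j) * g 0 := by rw [sum_mul]
    _ ≤ q ^ 1 / (1 - q) * g 0 :=
      mul_le_mul_of_nonneg_right (geom_sum_Ico_le_of_lt_one hq0 hq1) hg0
    _ = q / (1 - q) * g 0 := by rw [pow_one]

lemma exists_sum_Ico_binomWeight_le {x t : ℝ} (hx0 : 0 < x) (hxt : x < t) (ht1 : t ≤ 1) :
    ∃ C, 0 ≤ C ∧ ∀ N m : ℕ, t * N ≤ m →
      ∑ j ∈ Ico (m + 1) (N + 1), binomWeight N x j ≤ C * binomWeight N x m := by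
  have ht0 : 0 < t := hx0.trans hxt
  have hx1 : x < 1 := hxt.trans_le ht1
  have hq0 : 0 ≤ (1 - t) / t * (x / (1 - x)) :=
    mul_nonneg (div_nonneg (by linarith) ht0.le) (div_nonneg hx0.le (by linarith))
  have hq1 : (1 - t) / t * (x / (1 - x)) < 1 := by
    rw [div_mul_div_comm, div_lt_one (mul_pos ht0 (by linarith))]
    nlinarith
  set q := (1 - t) / t * (x / (1 - x))
  refine ⟨q / (1 - q), div_nonneg hq0 (by linarith), fun N m hm => ?_⟩
  have hgeom := sum_range_succ_le_of_le_mul (g := fun j => binomWeight N x (m + j)) hq0 hq1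
    (binomWeight_nonneg hx0.le hx1.le)
    (fun j => binomWeight_succ_le hx0 hx1 ht0 ht1 (hm.trans (by simp))) (N - m)
  rw [sum_Ico_eq_sum_range, Nat.add_sub_add_right]
  simpa only [add_assoc, add_comm 1, add_zero] using hgeom

lemma exists_sum_range_binomWeight_le {x s : ℝ} (hs0 : 0 ≤ s) (hsx : s < x) (hx1 : x < 1) :
    ∃ C, 0 ≤ C ∧ ∀ N m : ℕ, m ≤ s * N →
      ∑ j ∈ range m, binomWeight N x j ≤ C * binomWeight N x m := by
  obtain ⟨C, hC0, hC⟩ := exists_sum_Ico_binomWeight_le (x := 1 - x) (t := 1 - s)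
    (by linarith) (by linarith) (by linarith)
  refine ⟨C, hC0, fun N m hm => ?_⟩
  have hmN : m ≤ N := by
    have : s * N ≤ N := mul_le_of_le_one_left (Nat.cast_nonneg N) (by linarith)
    exact_mod_cast hm.trans this
  have hreflect : ∑ j ∈ range m, binomWeight N x j
      = ∑ j ∈ Ico (N - m + 1) (N + 1), binomWeight N (1 - x) j := calc
    _ = ∑ j ∈ Ico 0 m, binomWeight N (1 - x) (N - j) := by
      rw [Nat.Ico_zero_eq_range]
      exact sum_congr rfl fun j hj => (binomWeight_one_sub (by simp at hj; omega)).symm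
    _ = ∑ j ∈ Ico (N + 1 - m) (N + 1 - 0), binomWeight N (1 - x) j :=
      sum_Ico_reflect _ 0 (by omega)
    _ = _ := by rw [show N + 1 - m = N - m + 1 by omega, Nat.sub_zero]
  rw [hreflect, ← binomWeight_one_sub hmN]
  apply hC
  push_cast [hmN]
  linarith

noncomputable def logOddsRatio (x y : ℝ) : ℝ := log ((1 - x) * y / ((1 - y) * x))

/-- The paper's `x₀*`. -/
noncomputable def crossover (x y : ℝ) : ℝ := log ((1 - x) / (1 - y)) / logOddsRatio x y

lemma sub_lt_mul_log_div {p q : ℝ} (hp : 0 < p) (hq : 0 < q) (hpq : p ≠ q) :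
    p - q < p * log (p / q) := by
  have h := log_lt_sub_one_of_pos (div_pos hq hp)
    (by rwa [ne_eq, div_eq_one_iff_eq hp.ne', eq_comm])
  rw [← inv_div, log_inv]
  have : p * (q / p - 1) = q - p := by field_simp
  nlinarith

lemma binaryKL_pos {p q : ℝ} (hp0 : 0 < p) (hp1 : p < 1) (hq0 : 0 < q) (hq1 : q < 1)
    (hpq : p ≠ q) :
    0 < p * log (p / q) + (1 - p) * log ((1 - p) / (1 - q)) := by
  have h1 := sub_lt_mul_log_div hp0 hq0 hpq
  have h2 := sub_lt_mul_log_div (p := 1 - p) (q := 1 - q) (by linarith) (by linarith)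
    (by intro h; exact hpq (by linarith))
  linarith

lemma logOddsRatio_pos {x y : ℝ} (hx : 0 < x) (hxy : x < y) (hy : y < 1) :
    0 < logOddsRatio x y := by
  apply log_pos
  rw [one_lt_div (mul_pos (by linarith) hx)]
  nlinarith

lemma crossover_mul_logOddsRatio {x y : ℝ} (hx : 0 < x) (hxy : x < y) (hy : y < 1) :
    crossover x y * logOddsRatio x y = log ((1 - x) / (1 - y)) :=
  div_mul_cancel₀ _ (logOddsRatio_pos hx hxy hy).ne'

lemma crossover_mem_Ioo {x y : ℝ} (hx : 0 < x) (hxy : x < y) (hy : y < 1) :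
    crossover x y ∈ Set.Ioo x y := by
  have hy0 : 0 < y := hx.trans hxy
  have hx1 : 0 < 1 - x := by linarith
  have hy1 : 0 < 1 - y := by linarith
  have hxy' := binaryKL_pos hx (by linarith) hy0 hy hxy.ne
  have hyx' := binaryKL_pos hy0 hy hx (by linarith) hxy.ne'
  have hθ := logOddsRatio_pos hx hxy hy
  unfold crossover
  rw [Set.mem_Ioo, lt_div_iff₀ hθ, div_lt_iff₀ hθ]
  simp only [logOddsRatio, log_div, log_mul, hx.ne', hy0.ne', hx1.ne', hy1.ne', ne_eq,
    mul_eq_zero, or_self, not_false_eq_true] at hxy' hyx' ⊢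
  constructor <;> linarith

lemma binomWeight_eq_exp_mul {N k : ℕ} {x y : ℝ} (hx0 : 0 < x) (hx1 : x < 1) (hy0 : 0 < y)
    (hy1 : y < 1) (hk : k ≤ N) :
    binomWeight N x k
      = exp (N * log ((1 - x) / (1 - y)) - k * logOddsRatio x y) * binomWeight N y k := by
  have hx1' : 0 < 1 - x := by linarith
  have hy1' : 0 < 1 - y := by linarith
  rw [exp_sub, exp_nat_mul, exp_nat_mul, logOddsRatio, exp_log (by positivity),
    exp_log (by positivity)]
  obtain ⟨j, rfl⟩ := Nat.exists_eq_add_of_le hk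
  simp only [binomWeight, Nat.add_sub_cancel_left, div_pow, mul_pow, pow_add]
  field_simp

lemma eventually_mul_exp_neg_lt_one (C : ℝ) {c : ℝ} (hc : 0 < c) :
    ∀ᶠ N : ℕ in atTop, C * exp (-(c * N)) < 1 := by
  have := (tendsto_exp_neg_atTop_nhds_zero.comp
    (tendsto_natCast_atTop_atTop.const_mul_atTop hc)).const_mul C
  rw [mul_zero] at this
  exact this.eventually_lt_const one_pos

lemma eventually_one_lt_sum_binomWeight {xA xB t : ℝ} (h1 : 0 < xA) (h2 : xA < xB)
    (h3 : xB < 1) (ht : crossover xA xB < t) (ht1 : t ≤ 1) :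
    ∀ᶠ N : ℕ in atTop, ∀ m : ℕ, t * N ≤ m → m ≤ N →
      1 < ∑ j ∈ range (m + 1), (binomWeight N xA j + binomWeight N xB j) := by
  have hL := crossover_mem_Ioo h1 h2 h3
  have hθ := logOddsRatio_pos h1 h2 h3
  obtain ⟨C, hC0, hC⟩ := exists_sum_Ico_binomWeight_le h1 (hL.1.trans ht) ht1
  filter_upwards [eventually_mul_exp_neg_lt_one C (mul_pos hθ (sub_pos.2 ht))] with N hN m hm hmN
  have hsplit := sum_range_add_sum_Ico (binomWeight N xA) (Nat.succ_le_succ hmN)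
  rw [sum_range_binomWeight] at hsplit
  have hBpos : 0 < binomWeight N xB m := binomWeight_pos (h1.trans h2) h3 hmN
  have htilt : binomWeight N xA m
      ≤ exp (-(logOddsRatio xA xB * (t - crossover xA xB) * N)) * binomWeight N xB m := by
    rw [binomWeight_eq_exp_mul h1 (h2.trans h3) (h1.trans h2) h3 hmN,
      ← crossover_mul_logOddsRatio h1 h2 h3]
    gcongr
    nlinarith
  have hB : binomWeight N xB m ≤ ∑ j ∈ range (m + 1), binomWeight N xB j :=
    single_le_sum (f := binomWeight N xB) (fun j _ => binomWeight_nonneg (h1.trans h2).le h3.le)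
      (self_mem_range_succ m)
  have htail : ∑ j ∈ Ico (m + 1) (N + 1), binomWeight N xA j < binomWeight N xB m := calc
    _ ≤ C * binomWeight N xA m := hC N m hm
    _ ≤ C * exp (-(logOddsRatio xA xB * (t - crossover xA xB) * N)) * binomWeight N xB m := by
      rw [mul_assoc]; exact mul_le_mul_of_nonneg_left htilt hC0
    _ < binomWeight N xB m := mul_lt_of_lt_one_left hBpos hN
  rw [sum_add_distrib]
  linarith

lemma eventually_sum_binomWeight_le_one {xA xB s : ℝ} (h1 : 0 < xA) (h2 : xA < xB)
    (h3 : xB < 1) (hs0 : 0 ≤ s) (hs : s < crossover xA xB) :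
    ∀ᶠ N : ℕ in atTop, ∀ k : ℕ, (k : ℝ) + 1 ≤ s * N →
      ∑ j ∈ range (k + 1), (binomWeight N xA j + binomWeight N xB j) ≤ 1 := by
  have hL := crossover_mem_Ioo h1 h2 h3
  have hθ := logOddsRatio_pos h1 h2 h3
  obtain ⟨C, hC0, hC⟩ := exists_sum_range_binomWeight_le hs0 (hs.trans hL.2) h3
  filter_upwards [eventually_mul_exp_neg_lt_one C (mul_pos hθ (sub_pos.2 hs))] with N hN k hk
  have hkN : k + 1 ≤ N := by
    have : s * N ≤ N := mul_le_of_le_one_left (Nat.cast_nonneg N) (by linarith [hL.2])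
    exact_mod_cast hk.trans this
  have hsplit := sum_range_add_sum_Ico (binomWeight N xA) (by omega : k + 1 ≤ N + 1)
  rw [sum_range_binomWeight] at hsplit
  have hA : binomWeight N xA (k + 1) ≤ ∑ j ∈ Ico (k + 1) (N + 1), binomWeight N xA j :=
    single_le_sum (f := binomWeight N xA) (fun j _ => binomWeight_nonneg h1.le (h2.trans h3).le)
      (Finset.mem_Ico.2 ⟨le_rfl, by omega⟩)
  have htilt : binomWeight N xB (k + 1)
      ≤ exp (-(logOddsRatio xA xB * (crossover xA xB - s) * N)) * binomWeight N xA (k + 1) := by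
    rw [binomWeight_eq_exp_mul h1 (h2.trans h3) (h1.trans h2) h3 hkN, ← mul_assoc, ← exp_add,
      ← crossover_mul_logOddsRatio h1 h2 h3]
    refine le_mul_of_one_le_left (binomWeight_nonneg (h1.trans h2).le h3.le) (one_le_exp ?_)
    push_cast
    nlinarith
  have hhead : ∑ j ∈ range (k + 1), binomWeight N xB j ≤ binomWeight N xA (k + 1) := calc
    _ ≤ C * binomWeight N xB (k + 1) := hC N (k + 1) (by push_cast; exact hk)
    _ ≤ C * exp (-(logOddsRatio xA xB * (crossover xA xB - s) * N))
          * binomWeight N xA (k + 1) := by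
      rw [mul_assoc]; exact mul_le_mul_of_nonneg_left htilt hC0
    _ ≤ binomWeight N xA (k + 1) :=
      mul_le_of_le_one_left (binomWeight_nonneg h1.le (h2.trans h3).le) hN.le
  rw [sum_add_distrib]
  linarith

lemma tendsto_div_natCast_of_eventually_lt {u : ℕ → ℝ} {L : ℝ}
    (hlow : ∀ s < L, ∀ᶠ N in atTop, s * N < u N + 1)
    (hup : ∀ t > L, ∀ᶠ N in atTop, u N < t * N + 1) :
    Tendsto (fun N => u N / N) atTop (𝓝 L) := by
  have hlarge : ∀ {c : ℝ}, 0 < c → ∀ᶠ N : ℕ in atTop, 1 < c * N := fun hc =>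
    (tendsto_natCast_atTop_atTop.const_mul_atTop hc).eventually_gt_atTop 1
  refine tendsto_order.2 ⟨fun r hr => ?_, fun r hr => ?_⟩
  · filter_upwards [hlow ((r + L) / 2) (by linarith), hlarge (c := (L - r) / 2) (by linarith)]
      with N hs hN
    have hN0 : (0 : ℝ) < N := by by_contra! h; nlinarith
    rw [lt_div_iff₀ hN0]
    nlinarith
  · filter_upwards [hup ((r + L) / 2) (by linarith), hlarge (c := (r - L) / 2) (by linarith)]
      with N ht hN
    have hN0 : (0 : ℝ) < N := by by_contra! h; nlinarith
    rw [div_lt_iff₀ hN0]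
    nlinarith

section threshold

variable {xA xB : ℝ} {kstar : ℕ → ℕ}

lemma eventually_lt_kstar_add_one (h1 : 0 < xA) (h2 : xA < xB) (h3 : xB < 1)
    (hgt : ∀ N, 1 < ∑ j ∈ range (kstar N + 1), (binomWeight N xA j + binomWeight N xB j))
    {s : ℝ} (hs : s < crossover xA xB) :
    ∀ᶠ N in atTop, s * N < kstar N + 1 := by
  rcases lt_or_ge s 0 with hs0 | hs0
  · exact Eventually.of_forall fun N =>
      (mul_nonpos_of_nonpos_of_nonneg hs0.le (Nat.cast_nonneg N)).trans_lt (by positivity)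
  filter_upwards [eventually_sum_binomWeight_le_one h1 h2 h3 hs0 hs] with N hN
  by_contra! h
  exact (hN (kstar N) h).not_gt (hgt N)

lemma eventually_kstar_lt (h1 : 0 < xA) (h2 : xA < xB) (h3 : xB < 1)
    (hleast : ∀ N, ∀ k < kstar N,
      ∑ j ∈ range (k + 1), (binomWeight N xA j + binomWeight N xB j) ≤ 1)
    {t : ℝ} (ht : crossover xA xB < t) :
    ∀ᶠ N in atTop, (kstar N : ℝ) < t * N + 1 := by
  have hL := crossover_mem_Ioo h1 h2 h3
  set t' := min t ((crossover xA xB + 1) / 2)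
  have ht' : crossover xA xB < t' := lt_min ht (by linarith [hL.2])
  have ht'1 : t' ≤ 1 := (min_le_right _ _).trans (by linarith [hL.2])
  filter_upwards [eventually_one_lt_sum_binomWeight h1 h2 h3 ht' ht'1] with N hN
  have ht'N : 0 ≤ t' * N := mul_nonneg (by linarith [hL.1]) (Nat.cast_nonneg N)
  have hceil : ⌈t' * N⌉₊ ≤ N :=
    Nat.ceil_le.2 (mul_le_of_le_one_left (Nat.cast_nonneg N) ht'1)
  have hk : kstar N ≤ ⌈t' * N⌉₊ := by
    by_contra! h
    exact (hleast N _ h).not_gt (hN _ (Nat.le_ceil _) hceil)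
  calc (kstar N : ℝ) ≤ ⌈t' * N⌉₊ := by exact_mod_cast hk
    _ < t' * N + 1 := Nat.ceil_lt_add_one ht'N
    _ ≤ t * N + 1 := by gcongr; exact min_le_left _ _

end threshold

theorem stmt_10_general (xA xB : ℝ) (h1 : 0 < xA) (h2 : xA < xB) (h3 : xB < 1)
    (p : ℕ → ℝ → ℕ → ℝ)
    (hp : ∀ N x k, p N x k = (N.choose k : ℝ) * x ^ k * (1 - x) ^ (N - k))
    (kstar : ℕ → ℕ)
    (hgt : ∀ N, 1 < ∑ j ∈ Finset.range (kstar N + 1), (p N xA j + p N xB j))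
    (hleast : ∀ N, ∀ k < kstar N, (∑ j ∈ Finset.range (k + 1), (p N xA j + p N xB j)) ≤ 1) :
    Filter.Tendsto (fun N : ℕ => (kstar N : ℝ) / (N : ℝ)) Filter.atTop
      (nhds (Real.log ((1 - xA) / (1 - xB))
        / Real.log (((1 - xA) * xB) / ((1 - xB) * xA)))) := by
  obtain rfl : p = binomWeight := by
    funext N x k
    exact hp N x k
  exact tendsto_div_natCast_of_eventually_lt (L := crossover xA xB)
    (fun s hs => eventually_lt_kstar_add_one h1 h2 h3 hgt hs)
    (fun t ht => eventually_kstar_lt h1 h2 h3 hleast ht)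

/-- Binomial Fisher limiting policy: the equilibrium threshold `k*_N` of the Binomial
Fisher game satisfies `k*_N / N → x₀* = log((1−x_A)/(1−x_B)) / log(((1−x_A)·x_B)/((1−x_B)·x_A))`
as `N → ∞`. -/
theorem stmt_10 (xA xB : ℝ) (h1 : 0 < xA) (h2 : xA < xB) (h3 : xB < 1)
    (p : ℕ → ℝ → ℕ → ℝ)
    (hp : ∀ N x k, p N x k = (N.choose k : ℝ) * x ^ k * (1 - x) ^ (N - k))
    (kstar : ℕ → ℕ) (hks : ∀ N, kstar N ≤ N)
    (hgt : ∀ N, 1 < ∑ j ∈ Finset.range (kstar N + 1), (p N xA j + p N xB j))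
    (hleast : ∀ N, ∀ k < kstar N, (∑ j ∈ Finset.range (k + 1), (p N xA j + p N xB j)) ≤ 1) :
    Filter.Tendsto (fun N : ℕ => (kstar N : ℝ) / (N : ℝ)) Filter.atTop
      (nhds (Real.log ((1 - xA) / (1 - xB))
        / Real.log (((1 - xA) * xB) / ((1 - xB) * xA)))) :=
  stmt_10_general xA xB h1 h2 h3 p hp kstar hgt hleast
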